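/- Let R be a commutative ring, n a positive integer, and u, v two n×n matrices with entries in R. Then the sum over all permutations σ of {1,...,n} of the determinant of the n×n matrix whose (ℓ,k) entry is u_{ℓ,σ(k)}·v_{k,σ(k)} equals (det u)·(det v); that is, Σ_{σ∈S_n} det( (u_{ℓ,σ(k)} v_{k,σ(k)})_{1≤ℓ,k≤n} ) = det(u_{ℓ,k}) · det(v_{ℓ,k}). -/
import Mathlib


/-- For a commutative ring `R`, a positive integer `n`, and `n × n`
matrices `u`, `v` over `R`, the sum over all permutations `σ` of `{1,...,n}` of the
determinant of the matrix with `(ℓ,k)` entry `u ℓ (σ k) * v k (σ k)` equals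
`det u * det v`. -/
theorem sum_perm_det_mul_eq_det_mul_det
    {R : Type*} [CommRing R] (n : ℕ) (hn : 1 ≤ n)
    (u v : Matrix (Fin n) (Fin n) R) :
    ∑ σ : Equiv.Perm (Fin n),
        Matrix.det (Matrix.of fun ℓ k : Fin n => u ℓ (σ k) * v k (σ k))
      = Matrix.det u * Matrix.det v := by
  have key : ∀ σ : Equiv.Perm (Fin n),
      Matrix.det (Matrix.of fun ℓ k : Fin n => u ℓ (σ k) * v k (σ k))
        = ((Equiv.Perm.sign σ : ℤ) * ∏ k, v k (σ k)) * Matrix.det u := by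
    intro σ
    have h1 : Matrix.det (Matrix.of fun ℓ k : Fin n => (fun k => v k (σ k)) k *
        (u.submatrix id σ) ℓ k) = (∏ k, v k (σ k)) * Matrix.det (u.submatrix id σ) :=
      Matrix.det_mul_row (fun k => v k (σ k)) (u.submatrix id σ)
    simp only [Matrix.submatrix_apply, id_eq] at h1
    calc Matrix.det (Matrix.of fun ℓ k : Fin n => u ℓ (σ k) * v k (σ k))
        = Matrix.det (Matrix.of fun ℓ k : Fin n => v k (σ k) * u ℓ (σ k)) := by
          congr 1; ext ℓ k; exact mul_comm _ _
      _ = (∏ k, v k (σ k)) * Matrix.det (u.submatrix id σ) := h1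
      _ = (∏ k, v k (σ k)) * ((Equiv.Perm.sign σ : ℤ) * Matrix.det u) := by
          rw [Matrix.det_permute']
      _ = ((Equiv.Perm.sign σ : ℤ) * ∏ k, v k (σ k)) * Matrix.det u := by ring
  simp only [key, ← Finset.sum_mul]
  rw [mul_comm]
  congr 1
  rw [← Matrix.det_transpose v, Matrix.det_apply']
  simp [Matrix.transpose_apply]
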